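/- arXiv:2111.04663 — 2 statements merged into one kernel-verified Lean document; each statement's English description precedes it below -/
import Mathlib

section
/- Let I ⊆ ℝ be a nonempty interval, let ζ₁,…,ζ_N ∈ I, let ν = (1/N) Σ_{i=1}^N δ_{ζᵢ}, and let ε > 0. Then sup{ E_{ζ∼Q}[ζ] : Q a probability measure supported on the closure of I with finite first moment and W₁(Q, ν) ≤ ε } = min{ (1/N) Σ_{i=1}^N ζ_i + ε, sup I } (with the convention that the minimum equals (1/N) Σᵢ ζᵢ + ε when sup I = +∞). -/
open MeasureTheory
open scoped ENNReal

/-- The `p`-th power transport cost of a coupling `π` with ground cost `d`. -/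
noncomputable def transportCost {α : Type*} [MeasurableSpace α]
    (p : ℝ) (d : α → α → ℝ) (π : Measure (α × α)) : ℝ≥0∞ :=
  ∫⁻ w, ENNReal.ofReal (d w.1 w.2 ^ p) ∂π

/-- The `p`-Wasserstein distance between `μ` and `ν` with ground cost `d`:
the infimum of the `p`-th root of the transport cost over all couplings. -/
noncomputable def wassersteinDist {α : Type*} [MeasurableSpace α]
    (p : ℝ) (d : α → α → ℝ) (μ ν : Measure α) : ℝ≥0∞ :=
  (⨅ (π : Measure (α × α)) (_ : IsProbabilityMeasure π ∧
      π.map Prod.fst = μ ∧ π.map Prod.snd = ν), transportCost p d π) ^ (1 / p)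

/-- The empirical distribution of the points `ξ 1, …, ξ N`. -/
noncomputable def empMeasure {α : Type*} [MeasurableSpace α] {N : ℕ}
    (ξ : Fin N → α) : Measure α :=
  (N : ℝ≥0∞)⁻¹ • ∑ i, Measure.dirac (ξ i)

/-- Probability measures on `ℝ` supported on `S`, with finite `p`-th moment, within
`p`-Wasserstein distance (with cost `|·|`) `ε` of `ν`. -/
def realWassersteinBall (p : ℝ) (S : Set ℝ) (ν : Measure ℝ) (ε : ℝ) : Set (Measure ℝ) :=
  {Q | IsProbabilityMeasure Q ∧ Q Sᶜ = 0 ∧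
    (∫⁻ t, ENNReal.ofReal (|t| ^ p) ∂Q) < ⊤ ∧
    wassersteinDist p (fun a b => |a - b|) Q ν ≤ ENNReal.ofReal ε}

/-!
A coupling `π` of `Q` and `ν` gives `∫ x dQ - ∫ y dν = ∫ (x - y) dπ ≤ ∫ |x - y| dπ`, so every
measure in the ball has mean at most `m + ε`, where `m` is the mean of `ν`; a measure carried by
`closure I` also has mean at most `sup I`. Conversely, for `s ∈ I` above all `ζᵢ`, moving a
fraction `p` of the mass of `ν` to `s` costs `p (s - m)` and raises the mean by exactly that much;
with `p = min(ε, s - m) / (s - m)` the mean becomes `min (m + ε) s`, and `s` can be taken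
arbitrarily close to `sup I`.
-/

section EmpiricalMeasure

variable {α : Type*} [MeasurableSpace α] {N : ℕ}

lemma isProbabilityMeasure_empMeasure (hN : 0 < N) (ξ : Fin N → α) :
    IsProbabilityMeasure (empMeasure ξ) := by
  constructor
  simp only [empMeasure, Measure.smul_apply, Measure.finsetSum_apply, measure_univ,
    Finset.sum_const, Finset.card_univ, Fintype.card_fin, nsmul_eq_mul, mul_one, smul_eq_mul]
  exact ENNReal.inv_mul_cancel (by simp [hN.ne']) (by simp)

lemma ae_empMeasure_of_forall [MeasurableSingletonClass α] {ξ : Fin N → α} {P : α → Prop}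
    (h : ∀ i, P (ξ i)) : ∀ᵐ x ∂empMeasure ξ, P x := by
  rw [ae_iff]
  simp [empMeasure, Measure.smul_apply, Measure.finsetSum_apply, Measure.dirac_apply, h]

lemma integrable_id_empMeasure (hN : 0 < N) (ξ : Fin N → ℝ) :
    Integrable (fun t : ℝ => t) (empMeasure ξ) :=
  (integrable_finsetSum_measure.2 fun _ _ => integrable_dirac enorm_lt_top).smul_measure
    (ENNReal.inv_ne_top.2 (by simp [hN.ne']))

lemma integral_empMeasure (ξ : Fin N → ℝ) :
    ∫ t, t ∂empMeasure ξ = 1 / (N : ℝ) * ∑ i, ξ i := by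
  rw [empMeasure, integral_smul_measure,
    integral_finsetSum_measure fun i _ => integrable_dirac enorm_lt_top]
  simp [ENNReal.toReal_inv, one_div]

end EmpiricalMeasure

lemma lintegral_ofReal_abs_rpow_one_lt_top_iff {Q : Measure ℝ} :
    (∫⁻ t, ENNReal.ofReal (|t| ^ (1 : ℝ)) ∂Q) < ⊤ ↔ Integrable (fun t : ℝ => t) Q := by
  simp only [Real.rpow_one, ← Real.norm_eq_abs, ofReal_norm]
  exact ⟨fun h => ⟨aestronglyMeasurable_id, h⟩, fun h => h.2⟩

lemma EReal.coe_integral_le_of_ae_coe_le {α : Type*} [MeasurableSpace α] {μ : Measure α}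
    [IsProbabilityMeasure μ] {f : α → ℝ} (hf : Integrable f μ) {c : EReal}
    (h : ∀ᵐ x ∂μ, (f x : EReal) ≤ c) : ((∫ x, f x ∂μ : ℝ) : EReal) ≤ c := by
  induction c using EReal.rec with
  | bot =>
    obtain ⟨x, hx⟩ := h.exists
    exact absurd hx (by simp)
  | coe r =>
    have := integral_mono_ae hf (integrable_const r) (h.mono fun _ hx => EReal.coe_le_coe_iff.1 hx)
    exact EReal.coe_le_coe_iff.2 (by simpa using this)
  | top => exact le_top

section Coupling

variable {α : Type*} [MeasurableSpace α] {d : α → α → ℝ} {μ ν : Measure α}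

lemma wassersteinDist_one_le_transportCost {π : Measure (α × α)} [IsProbabilityMeasure π]
    (h₁ : π.map Prod.fst = μ) (h₂ : π.map Prod.snd = ν) :
    wassersteinDist 1 d μ ν ≤ transportCost 1 d π := by
  rw [wassersteinDist, div_one, ENNReal.rpow_one]
  exact iInf₂_le π ⟨‹_›, h₁, h₂⟩

lemma exists_coupling_transportCost_lt {r : ℝ≥0∞} (h : wassersteinDist 1 d μ ν < r) :
    ∃ π : Measure (α × α), IsProbabilityMeasure π ∧ π.map Prod.fst = μ ∧
      π.map Prod.snd = ν ∧ transportCost 1 d π < r := by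
  rw [wassersteinDist, div_one, ENNReal.rpow_one] at h
  simp only [iInf_lt_iff] at h
  obtain ⟨π, ⟨hπ, h₁, h₂⟩, hc⟩ := h
  exact ⟨π, hπ, h₁, h₂, hc⟩

end Coupling

section MeanBound

variable {Q ν : Measure ℝ}

lemma integral_id_le_add_of_transportCost_le (hQ : Integrable (fun t : ℝ => t) Q)
    (hν : Integrable (fun t : ℝ => t) ν) {π : Measure (ℝ × ℝ)}
    (h₁ : π.map Prod.fst = Q) (h₂ : π.map Prod.snd = ν) {r : ℝ} (hr : 0 ≤ r)
    (hc : transportCost 1 (fun a b => |a - b|) π ≤ ENNReal.ofReal r) :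
    ∫ t, t ∂Q ≤ ∫ t, t ∂ν + r := by
  subst h₁ h₂
  rw [integral_map (f := fun t : ℝ => t) measurable_fst.aemeasurable aestronglyMeasurable_id,
    integral_map (f := fun t : ℝ => t) measurable_snd.aemeasurable aestronglyMeasurable_id]
  have hfst : Integrable (fun w : ℝ × ℝ => w.1) π :=
    (integrable_map_measure aestronglyMeasurable_id measurable_fst.aemeasurable).1 hQ
  have hsnd : Integrable (fun w : ℝ × ℝ => w.2) π :=
    (integrable_map_measure aestronglyMeasurable_id measurable_snd.aemeasurable).1 hν
  have hdiff : Integrable (fun w : ℝ × ℝ => w.1 - w.2) π := hfst.sub hsnd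
  have hdist : ∫ w, |w.1 - w.2| ∂π ≤ r := by
    rw [← ENNReal.ofReal_le_ofReal_iff hr, ofReal_integral_eq_lintegral_ofReal
      hdiff.abs (Filter.Eventually.of_forall fun _ => abs_nonneg _)]
    simpa [transportCost] using hc
  have hmono := integral_mono hdiff hdiff.abs fun w => le_abs_self (w.1 - w.2)
  rw [integral_sub hfst hsnd] at hmono
  linarith

lemma integral_id_le_add_of_wassersteinDist_one_le (hQ : Integrable (fun t : ℝ => t) Q)
    (hν : Integrable (fun t : ℝ => t) ν) {ε : ℝ} (hε : 0 ≤ ε)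
    (h : wassersteinDist 1 (fun a b => |a - b|) Q ν ≤ ENNReal.ofReal ε) :
    ∫ t, t ∂Q ≤ ∫ t, t ∂ν + ε := by
  refine le_of_forall_pos_le_add fun δ hδ => ?_
  have hlt : wassersteinDist 1 (fun a b => |a - b|) Q ν < ENNReal.ofReal (ε + δ) :=
    h.trans_lt ((ENNReal.ofReal_lt_ofReal_iff (by linarith)).2 (by linarith))
  obtain ⟨π, -, h₁, h₂, hc⟩ := exists_coupling_transportCost_lt hlt
  linarith [integral_id_le_add_of_transportCost_le hQ hν h₁ h₂ (by linarith) hc.le]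

end MeanBound

section DiracMixture

variable (μ : Measure ℝ) (p s : ℝ)

noncomputable def diracMixture : Measure ℝ :=
  ENNReal.ofReal (1 - p) • μ + ENNReal.ofReal p • Measure.dirac s

noncomputable def diracMixtureCoupling : Measure (ℝ × ℝ) :=
  ENNReal.ofReal (1 - p) • μ.map (fun t => (t, t)) + ENNReal.ofReal p • μ.map (fun t => (s, t))

variable {μ p s}

lemma ENNReal.ofReal_one_sub_add_ofReal (hp₀ : 0 ≤ p) (hp₁ : p ≤ 1) :
    ENNReal.ofReal (1 - p) + ENNReal.ofReal p = 1 := by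
  rw [← ENNReal.ofReal_add (by linarith) hp₀, sub_add_cancel, ENNReal.ofReal_one]

lemma map_fst_diracMixtureCoupling [IsProbabilityMeasure μ] :
    (diracMixtureCoupling μ p s).map Prod.fst = diracMixture μ p s := by
  rw [diracMixtureCoupling, Measure.map_add _ _ measurable_fst, Measure.map_smul,
    Measure.map_smul, Measure.map_map measurable_fst (by fun_prop),
    Measure.map_map measurable_fst (by fun_prop)]
  simp [Function.comp_def, Measure.map_id', Measure.map_const, diracMixture]

lemma map_snd_diracMixtureCoupling (hp₀ : 0 ≤ p) (hp₁ : p ≤ 1) :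
    (diracMixtureCoupling μ p s).map Prod.snd = μ := by
  rw [diracMixtureCoupling, Measure.map_add _ _ measurable_snd, Measure.map_smul,
    Measure.map_smul, Measure.map_map measurable_snd (by fun_prop),
    Measure.map_map measurable_snd (by fun_prop)]
  simp only [Function.comp_def, Measure.map_id']
  rw [← add_smul, ENNReal.ofReal_one_sub_add_ofReal hp₀ hp₁, one_smul]

lemma isProbabilityMeasure_diracMixtureCoupling [IsProbabilityMeasure μ] (hp₀ : 0 ≤ p)
    (hp₁ : p ≤ 1) : IsProbabilityMeasure (diracMixtureCoupling μ p s) := by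
  constructor
  have h := Measure.map_apply (μ := diracMixtureCoupling μ p s) measurable_snd MeasurableSet.univ
  rwa [map_snd_diracMixtureCoupling hp₀ hp₁, Set.preimage_univ, measure_univ, eq_comm] at h

lemma isProbabilityMeasure_diracMixture [IsProbabilityMeasure μ] (hp₀ : 0 ≤ p) (hp₁ : p ≤ 1) :
    IsProbabilityMeasure (diracMixture μ p s) := by
  have := isProbabilityMeasure_diracMixtureCoupling (μ := μ) (s := s) hp₀ hp₁
  rw [← map_fst_diracMixtureCoupling]
  exact Measure.isProbabilityMeasure_map measurable_fst.aemeasurable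

lemma transportCost_diracMixtureCoupling :
    transportCost 1 (fun a b => |a - b|) (diracMixtureCoupling μ p s) =
      ENNReal.ofReal p * ∫⁻ t, ENNReal.ofReal |s - t| ∂μ := by
  rw [transportCost, diracMixtureCoupling, lintegral_add_measure, lintegral_smul_measure,
    lintegral_smul_measure, lintegral_map (by fun_prop) (by fun_prop),
    lintegral_map (by fun_prop) (by fun_prop)]
  simp

lemma wassersteinDist_one_diracMixture_le [IsProbabilityMeasure μ] (hp₀ : 0 ≤ p)
    (hp₁ : p ≤ 1) : wassersteinDist 1 (fun a b => |a - b|) (diracMixture μ p s) μ ≤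
      ENNReal.ofReal p * ∫⁻ t, ENNReal.ofReal |s - t| ∂μ := by
  have := isProbabilityMeasure_diracMixtureCoupling (μ := μ) (s := s) hp₀ hp₁
  rw [← transportCost_diracMixtureCoupling]
  exact wassersteinDist_one_le_transportCost map_fst_diracMixtureCoupling
    (map_snd_diracMixtureCoupling hp₀ hp₁)

lemma diracMixture_compl_eq_zero {S : Set ℝ} (hμ : μ Sᶜ = 0) (hs : s ∈ S) :
    diracMixture μ p s Sᶜ = 0 := by
  simp [diracMixture, hμ, hs]

lemma integrable_id_diracMixture (hμ : Integrable (fun t : ℝ => t) μ) :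
    Integrable (fun t : ℝ => t) (diracMixture μ p s) :=
  (hμ.smul_measure ENNReal.ofReal_ne_top).add_measure
    ((integrable_dirac enorm_lt_top).smul_measure ENNReal.ofReal_ne_top)

lemma integral_id_diracMixture (hμ : Integrable (fun t : ℝ => t) μ) (hp₀ : 0 ≤ p)
    (hp₁ : p ≤ 1) : ∫ t, t ∂diracMixture μ p s = (1 - p) * ∫ t, t ∂μ + p * s := by
  rw [diracMixture, integral_add_measure (hμ.smul_measure ENNReal.ofReal_ne_top)
    ((integrable_dirac enorm_lt_top).smul_measure ENNReal.ofReal_ne_top),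
    integral_smul_measure, integral_smul_measure, integral_dirac,
    ENNReal.toReal_ofReal (by linarith), ENNReal.toReal_ofReal hp₀, smul_eq_mul, smul_eq_mul]

end DiracMixture

lemma lintegral_ofReal_abs_sub_eq_of_ae_le {μ : Measure ℝ} [IsProbabilityMeasure μ]
    (hμ : Integrable (fun t : ℝ => t) μ) {s : ℝ} (hs : ∀ᵐ t ∂μ, t ≤ s) :
    ∫⁻ t, ENNReal.ofReal |s - t| ∂μ = ENNReal.ofReal (s - ∫ t, t ∂μ) := by
  have hsub : Integrable (fun t => s - t) μ := (integrable_const s).sub hμ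
  rw [← lintegral_congr_ae (hs.mono fun t ht => by rw [abs_of_nonneg (sub_nonneg.2 ht)]),
    ← ofReal_integral_eq_lintegral_ofReal hsub (hs.mono fun t ht => sub_nonneg.2 ht),
    integral_sub (integrable_const s) hμ, integral_const, probReal_univ, one_smul]

lemma exists_mem_realWassersteinBall_integral_eq_min {μ : Measure ℝ} [IsProbabilityMeasure μ]
    (hμ : Integrable (fun t : ℝ => t) μ) {S : Set ℝ} (hμS : μ Sᶜ = 0) {s : ℝ} (hs : s ∈ S)
    (hμs : ∀ᵐ t ∂μ, t ≤ s) {ε : ℝ} (hε : 0 ≤ ε) :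
    ∃ Q ∈ realWassersteinBall 1 S μ ε, ∫ t, t ∂Q = min (∫ t, t ∂μ + ε) s := by
  set m := ∫ t, t ∂μ
  have hms : 0 ≤ s - m := by
    simpa [sub_nonneg] using integral_mono_ae hμ (integrable_const s) hμs
  set p := min ε (s - m) / (s - m)
  -- when `s = m` the division gives `p = 0`, which is still the right choice
  have hp : p * (s - m) = min ε (s - m) := div_mul_cancel_of_imp fun h => by simp [h, hε]
  have hp₀ : 0 ≤ p := div_nonneg (le_min hε hms) hms
  have hp₁ : p ≤ 1 := div_le_one_of_le₀ (min_le_right _ _) hms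
  have := isProbabilityMeasure_diracMixture (μ := μ) (s := s) hp₀ hp₁
  refine ⟨diracMixture μ p s, ⟨this, diracMixture_compl_eq_zero hμS hs,
    lintegral_ofReal_abs_rpow_one_lt_top_iff.2 (integrable_id_diracMixture hμ), ?_⟩, ?_⟩
  · calc wassersteinDist 1 (fun a b => |a - b|) (diracMixture μ p s) μ
        ≤ ENNReal.ofReal p * ∫⁻ t, ENNReal.ofReal |s - t| ∂μ :=
          wassersteinDist_one_diracMixture_le hp₀ hp₁
      _ = ENNReal.ofReal (min ε (s - m)) := by
          rw [lintegral_ofReal_abs_sub_eq_of_ae_le hμ hμs, ← ENNReal.ofReal_mul hp₀, hp]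
      _ ≤ ENNReal.ofReal ε := ENNReal.ofReal_le_ofReal (min_le_left _ _)
  · calc ∫ t, t ∂diracMixture μ p s = m + p * (s - m) := by
          rw [integral_id_diracMixture hμ hp₀ hp₁]; ring
      _ = min (m + ε) s := by rw [hp, ← min_add_add_left, add_sub_cancel]

lemma coe_integral_le_min_of_mem_realWassersteinBall {I : Set ℝ} {ν Q : Measure ℝ}
    (hν : Integrable (fun t : ℝ => t) ν) {ε : ℝ} (hε : 0 ≤ ε)
    (hQ : Q ∈ realWassersteinBall 1 (closure I) ν ε) :
    ((∫ t, t ∂Q : ℝ) : EReal) ≤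
      min ((∫ t, t ∂ν + ε : ℝ) : EReal) (sSup ((fun t : ℝ => (t : EReal)) '' I)) := by
  obtain ⟨hQprob, hQS, hQm, hQW⟩ := hQ
  have hQi := lintegral_ofReal_abs_rpow_one_lt_top_iff.1 hQm
  have hclosure : closure I ⊆ {t : ℝ | (t : EReal) ≤ sSup ((fun t : ℝ => (t : EReal)) '' I)} :=
    closure_minimal (fun _ ht => le_sSup (Set.mem_image_of_mem (fun t : ℝ => (t : EReal)) ht))
      (isClosed_le continuous_coe_real_ereal continuous_const)
  refine le_min (EReal.coe_le_coe_iff.2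
    (integral_id_le_add_of_wassersteinDist_one_le hQi hν hε hQW)) ?_
  have hQI : ∀ᵐ t ∂Q, t ∈ closure I := mem_ae_iff.2 hQS
  exact EReal.coe_integral_le_of_ae_coe_le hQi (hQI.mono fun _ ht => hclosure ht)

lemma coe_min_le_sSup_integral_realWassersteinBall_empMeasure {N : ℕ} (hN : 0 < N) {I : Set ℝ}
    {ζ : Fin N → ℝ} (hζ : ∀ i, ζ i ∈ I) {ε : ℝ} (hε : 0 ≤ ε) {s : ℝ} (hs : s ∈ I) :
    min ((∫ t, t ∂empMeasure ζ + ε : ℝ) : EReal) (s : EReal) ≤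
      sSup ((fun Q : Measure ℝ => ((∫ t, t ∂Q : ℝ) : EReal)) ''
        realWassersteinBall 1 (closure I) (empMeasure ζ) ε) := by
  have := isProbabilityMeasure_empMeasure hN ζ
  obtain ⟨i₀, -, hi₀⟩ := Finset.exists_max_image Finset.univ ζ ⟨⟨0, hN⟩, Finset.mem_univ _⟩
  -- raising `s` above every `ζ i` keeps it in `I` and can only increase the minimum
  obtain ⟨Q, hQ, hQmean⟩ := exists_mem_realWassersteinBall_integral_eq_min
    (integrable_id_empMeasure hN ζ)
    (mem_ae_iff.1 (ae_empMeasure_of_forall fun i => subset_closure (hζ i)))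
    (subset_closure (max_rec' I hs (hζ i₀)))
    (ae_empMeasure_of_forall fun i => le_max_of_le_right (hi₀ i (Finset.mem_univ i))) hε
  refine le_sSup_of_le ⟨Q, hQ, rfl⟩ ?_
  dsimp only
  rw [hQmean, Monotone.map_min fun _ _ => EReal.coe_le_coe_iff.2]
  exact min_le_min_left _ (EReal.coe_le_coe_iff.2 (le_max_left s (ζ i₀)))

theorem statement15_general {N : ℕ} (hN : 0 < N)
    (I : Set ℝ)
    (ζ : Fin N → ℝ) (hζ : ∀ i, ζ i ∈ I) (ε : ℝ) (hε : 0 < ε) :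
    sSup ((fun Q : Measure ℝ => ((∫ t, t ∂Q : ℝ) : EReal)) ''
        realWassersteinBall 1 (closure I) (empMeasure ζ) ε) =
    min (((1 / (N : ℝ)) * ∑ i, ζ i + ε : ℝ) : EReal)
      (sSup ((fun t : ℝ => (t : EReal)) '' I)) := by
  rw [← integral_empMeasure]
  refine le_antisymm (sSup_le ?_) (inf_sSup_eq.trans_le (iSup₂_le ?_))
  · rintro _ ⟨Q, hQ, rfl⟩
    exact coe_integral_le_min_of_mem_realWassersteinBall (integrable_id_empMeasure hN ζ) hε.le hQ
  · rintro _ ⟨s, hs, rfl⟩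
    exact coe_min_le_sSup_integral_realWassersteinBall_empMeasure hN hζ hε.le hs

/-- Worst-case expected value over a `1`-Wasserstein ball around an empirical
distribution on an interval: `sup = min(mean + ε, sup I)`. -/
theorem statement15 {N : ℕ} (hN : 0 < N)
    (I : Set ℝ) (hI : I.Nonempty) (hIc : I.OrdConnected)
    (ζ : Fin N → ℝ) (hζ : ∀ i, ζ i ∈ I) (ε : ℝ) (hε : 0 < ε) :
    sSup ((fun Q : Measure ℝ => ((∫ t, t ∂Q : ℝ) : EReal)) ''
        realWassersteinBall 1 (closure I) (empMeasure ζ) ε) =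
    min (((1 / (N : ℝ)) * ∑ i, ζ i + ε : ℝ) : EReal)
      (sSup ((fun t : ℝ => (t : EReal)) '' I)) :=
  statement15_general hN I ζ hζ ε hε
end

section
/- Let ζ₁,…,ζ_N ∈ ℝ, let ν = (1/N) Σ_{i=1}^N δ_{ζᵢ}, and let ε > 0. Then sup{ Var_{ζ∼Q}[ζ] : Q ∈ 𝒫₂(ℝ), W₂(Q, ν) ≤ ε } = ( sqrt( (1/N) Σ_{i=1}^N ζᵢ² − ( (1/N) Σ_{i=1}^N ζᵢ )² ) + ε )². -/
open MeasureTheory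
open scoped ENNReal

/-!
Standard deviation is `1`-Lipschitz for `W₂` on `ℝ`: if `π` couples `Q` with `ν` and `m` is the
mean of `ν`, Minkowski's inequality in `L²(π)` gives `‖x - m‖_{L²(Q)} ≤ ‖x - y‖_{L²(π)} + σ(ν)`,
while `σ(Q) ≤ ‖x - m‖_{L²(Q)}`. Hence every `Q` in the ball has variance at most `(σ(ν) + ε)²`.
The bound is attained by the push-forward of `ν` under the dilation
`x ↦ m + (1 + ε / σ(ν)) (x - m)`, or, when `σ(ν) = 0`, by splitting the atom `m` into `m ± ε`.
-/

open ProbabilityTheory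

lemma eLpNorm_two_sq_eq_lintegral {α : Type*} [MeasurableSpace α] {μ : Measure α} (f : α → ℝ) :
    eLpNorm f 2 μ ^ 2 = ∫⁻ x, ENNReal.ofReal (f x ^ 2) ∂μ := by
  have := eLpNorm_nnreal_pow_eq_lintegral (f := f) (μ := μ) (p := 2) two_ne_zero
  simp only [NNReal.coe_ofNat, ENNReal.coe_ofNat, ENNReal.rpow_two] at this
  rw [this]
  refine lintegral_congr fun x => ?_
  rw [← enorm_pow, Real.enorm_of_nonneg (sq_nonneg _)]

section Empirical

variable {α : Type*} [MeasurableSpace α] [MeasurableSingletonClass α] {n : ℕ}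

lemma lintegral_empMeasure (x : Fin n → α) (f : α → ℝ≥0∞) :
    ∫⁻ a, f a ∂empMeasure x = (n : ℝ≥0∞)⁻¹ * ∑ i, f (x i) := by
  simp [empMeasure, lintegral_finsetSum_measure]

lemma integral_empMeasure_s18 (x : Fin n → α) (f : α → ℝ) :
    ∫ a, f a ∂empMeasure x = (n : ℝ)⁻¹ * ∑ i, f (x i) := by
  rw [empMeasure, integral_smul_measure,
    integral_finsetSum_measure fun i _ => integrable_dirac enorm_lt_top]
  simp

lemma isProbabilityMeasure_empMeasure_s18 (hn : 0 < n) (x : Fin n → α) :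
    IsProbabilityMeasure (empMeasure x) := by
  constructor
  rw [← setLIntegral_one, Measure.restrict_univ, lintegral_empMeasure]
  simp [ENNReal.inv_mul_cancel, hn.ne']

lemma eLpNorm_empMeasure_sq (hn : 0 < n) (x : Fin n → α) (f : α → ℝ) :
    eLpNorm f 2 (empMeasure x) ^ 2 = ENNReal.ofReal ((n : ℝ)⁻¹ * ∑ i, f (x i) ^ 2) := by
  rw [eLpNorm_two_sq_eq_lintegral, lintegral_empMeasure, ENNReal.ofReal_mul (by positivity),
    ENNReal.ofReal_inv_of_pos (by exact_mod_cast hn), ENNReal.ofReal_natCast,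
    ENNReal.ofReal_sum_of_nonneg fun i _ => sq_nonneg _]

end Empirical

lemma memLp_id_empMeasure {n : ℕ} (hn : 0 < n) (x : Fin n → ℝ) : MemLp id 2 (empMeasure x) := by
  have h : eLpNorm id 2 (empMeasure x) ^ 2 ≠ ⊤ :=
    eLpNorm_empMeasure_sq hn x id ▸ ENNReal.ofReal_ne_top
  exact ⟨aestronglyMeasurable_id, lt_top_iff_ne_top.2 (by simpa using h)⟩

lemma variance_empMeasure {n : ℕ} (hn : 0 < n) (x : Fin n → ℝ) :
    Var[id; empMeasure x] = (n : ℝ)⁻¹ * ∑ i, x i ^ 2 - ((n : ℝ)⁻¹ * ∑ i, x i) ^ 2 := by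
  have := isProbabilityMeasure_empMeasure_s18 hn x
  rw [variance_eq_sub (memLp_id_empMeasure hn x)]
  simp [integral_empMeasure_s18]

section Variance

variable {Ω : Type*} [MeasurableSpace Ω] {μ : Measure Ω} {X : Ω → ℝ}

lemma integral_sq_eq_toReal_eLpNorm_sq {f : Ω → ℝ} (hf : AEStronglyMeasurable f μ) :
    ∫ x, f x ^ 2 ∂μ = (eLpNorm f 2 μ).toReal ^ 2 := by
  rw [← ENNReal.toReal_pow, eLpNorm_two_sq_eq_lintegral,
    integral_eq_lintegral_of_nonneg_ae (.of_forall fun x => sq_nonneg _) (hf.pow 2)]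

lemma ofReal_sqrt_variance_le_eLpNorm_sub_const [IsProbabilityMeasure μ]
    (hX : AEStronglyMeasurable X μ) (c : ℝ) :
    ENNReal.ofReal √Var[X; μ] ≤ eLpNorm (fun ω => X ω - c) 2 μ := by
  have hXc : AEStronglyMeasurable (fun ω => X ω - c) μ := hX.sub aestronglyMeasurable_const
  have h : Var[X; μ] ≤ (eLpNorm (fun ω => X ω - c) 2 μ).toReal ^ 2 :=
    calc Var[X; μ] = Var[fun ω => X ω - c; μ] := (variance_sub_const hX c).symm
      _ ≤ μ[(fun ω => X ω - c) ^ 2] := variance_le_expectation_sq hXc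
      _ = _ := integral_sq_eq_toReal_eLpNorm_sq hXc
  refine (ENNReal.ofReal_le_ofReal ?_).trans ENNReal.ofReal_toReal_le
  exact Real.sqrt_le_iff.2 ⟨ENNReal.toReal_nonneg, h⟩

lemma eLpNorm_sub_integral_eq_ofReal_sqrt_variance [IsFiniteMeasure μ] (hX : MemLp X 2 μ) :
    eLpNorm (fun ω => X ω - μ[X]) 2 μ = ENNReal.ofReal √Var[X; μ] := by
  have hXc : MemLp (fun ω => X ω - μ[X]) 2 μ := hX.sub (memLp_const _)
  rw [variance_eq_integral hX.aestronglyMeasurable.aemeasurable,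
    integral_sq_eq_toReal_eLpNorm_sq hXc.aestronglyMeasurable,
    Real.sqrt_sq ENNReal.toReal_nonneg, ENNReal.ofReal_toReal hXc.eLpNorm_ne_top]

lemma eq_dirac_of_variance_eq_zero {ν : Measure ℝ} [IsProbabilityMeasure ν] (hν : MemLp id 2 ν)
    (h : Var[id; ν] = 0) : ν = Measure.dirac ν[id] := by
  calc ν = ν.map id := Measure.map_id.symm
    _ = ν.map fun _ => ν[id] := Measure.map_congr (ae_eq_integral_of_variance_eq_zero hν h)
    _ = Measure.dirac ν[id] := by simp [Measure.map_const]

end Variance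

lemma transportCost_two_eq_eLpNorm_sq (π : Measure (ℝ × ℝ)) :
    transportCost 2 (fun a b => |a - b|) π = eLpNorm (fun w => w.1 - w.2) 2 π ^ 2 := by
  rw [eLpNorm_two_sq_eq_lintegral, transportCost]
  simp_rw [Real.rpow_two, sq_abs]

lemma wassersteinDist_two_eq_iInf_eLpNorm (μ ν : Measure ℝ) :
    wassersteinDist 2 (fun a b => |a - b|) μ ν = ⨅ (π : Measure (ℝ × ℝ))
      (_ : IsProbabilityMeasure π ∧ π.map Prod.fst = μ ∧ π.map Prod.snd = ν),
      eLpNorm (fun w => w.1 - w.2) 2 π := by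
  have h := fun x : ℝ≥0∞ => ENNReal.orderIsoRpow_apply (1 / 2) one_half_pos x
  simp_rw [wassersteinDist, transportCost_two_eq_eLpNorm_sq, ← h, OrderIso.map_iInf, h,
    ← ENNReal.rpow_natCast, ← ENNReal.rpow_mul]
  norm_num

lemma wassersteinDist_map_le_eLpNorm_sub {α : Type*} [MeasurableSpace α] (μ : Measure α)
    [IsProbabilityMeasure μ] {f g : α → ℝ} (hf : Measurable f) (hg : Measurable g) :
    wassersteinDist 2 (fun a b => |a - b|) (μ.map f) (μ.map g) ≤
      eLpNorm (fun x => f x - g x) 2 μ := by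
  have hfg : Measurable fun x => (f x, g x) := hf.prodMk hg
  rw [wassersteinDist_two_eq_iInf_eLpNorm]
  refine iInf₂_le_of_le (μ.map fun x => (f x, g x))
    ⟨Measure.isProbabilityMeasure_map hfg.aemeasurable,
      by rw [Measure.map_map measurable_fst hfg]; rfl,
      by rw [Measure.map_map measurable_snd hfg]; rfl⟩ ?_
  rw [eLpNorm_map_measure (by fun_prop) hfg.aemeasurable]
  rfl

lemma eLpNorm_sub_const_le_wassersteinDist_add (μ ν : Measure ℝ) (c : ℝ) :
    eLpNorm (fun x => x - c) 2 μ ≤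
      wassersteinDist 2 (fun a b => |a - b|) μ ν + eLpNorm (fun y => y - c) 2 ν := by
  rw [wassersteinDist_two_eq_iInf_eLpNorm, ← tsub_le_iff_right]
  refine le_iInf₂ fun π ⟨_, hfst, hsnd⟩ => tsub_le_iff_right.2 ?_
  rw [← hfst, ← hsnd, eLpNorm_map_measure (by fun_prop) (by fun_prop),
    eLpNorm_map_measure (by fun_prop) (by fun_prop)]
  have hsplit :
      (fun x => x - c) ∘ Prod.fst = (fun w : ℝ × ℝ => w.1 - w.2) + fun w => w.2 - c := by
    ext w; simp
  rw [hsplit]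
  exact eLpNorm_add_le (by fun_prop) (by fun_prop) one_le_two

lemma ofReal_sqrt_variance_le_wassersteinDist_add {Q ν : Measure ℝ} [IsProbabilityMeasure Q]
    [IsFiniteMeasure ν] (hν : MemLp id 2 ν) :
    ENNReal.ofReal √Var[id; Q] ≤
      wassersteinDist 2 (fun a b => |a - b|) Q ν + ENNReal.ofReal √Var[id; ν] := by
  have hQ := ofReal_sqrt_variance_le_eLpNorm_sub_const (μ := Q) aestronglyMeasurable_id ν[id]
  have hν' := eLpNorm_sub_integral_eq_ofReal_sqrt_variance hν
  simp only [id_eq] at hQ hν'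
  rw [← hν']
  exact hQ.trans (eLpNorm_sub_const_le_wassersteinDist_add Q ν _)

lemma variance_le_of_wassersteinDist_le {Q ν : Measure ℝ} [IsProbabilityMeasure Q]
    [IsFiniteMeasure ν] (hν : MemLp id 2 ν) {ε : ℝ} (hε : 0 ≤ ε)
    (hW : wassersteinDist 2 (fun a b => |a - b|) Q ν ≤ ENNReal.ofReal ε) :
    Var[id; Q] ≤ (√Var[id; ν] + ε) ^ 2 := by
  have h : ENNReal.ofReal √Var[id; Q] ≤ ENNReal.ofReal ε + ENNReal.ofReal √Var[id; ν] :=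
    (ofReal_sqrt_variance_le_wassersteinDist_add hν).trans (by gcongr)
  rw [← ENNReal.ofReal_add hε (Real.sqrt_nonneg _),
    ENNReal.ofReal_le_ofReal_iff (by positivity), Real.sqrt_le_iff] at h
  linarith [h.2]

lemma mem_realWassersteinBall_of_memLp {Q ν : Measure ℝ} [IsProbabilityMeasure Q]
    (hQ : MemLp id 2 Q) {ε : ℝ}
    (hW : wassersteinDist 2 (fun a b => |a - b|) Q ν ≤ ENNReal.ofReal ε) :
    Q ∈ realWassersteinBall 2 Set.univ ν ε := by
  refine ⟨‹_›, by simp, ?_, hW⟩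
  have h : ∫⁻ t, ENNReal.ofReal (|t| ^ (2 : ℝ)) ∂Q = eLpNorm id 2 Q ^ 2 := by
    simp [eLpNorm_two_sq_eq_lintegral]
  exact h ▸ ENNReal.pow_lt_top hQ.eLpNorm_lt_top

lemma exists_mem_realWassersteinBall_dirac_variance_eq (m : ℝ) {ε : ℝ} (hε : 0 ≤ ε) :
    ∃ Q ∈ realWassersteinBall 2 Set.univ (Measure.dirac m) ε, Var[id; Q] = ε ^ 2 := by
  set Q := empMeasure ![m + ε, m - ε]
  have := isProbabilityMeasure_empMeasure_s18 two_pos ![m + ε, m - ε]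
  have hcost : eLpNorm (fun x => x - m) 2 Q ≤ ENNReal.ofReal ε := by
    rw [← ENNReal.pow_le_pow_left_iff two_ne_zero, eLpNorm_empMeasure_sq two_pos,
      ← ENNReal.ofReal_pow hε]
    refine le_of_eq (congrArg ENNReal.ofReal ?_)
    simp [Fin.sum_univ_two]
    ring
  have hW : wassersteinDist 2 (fun a b => |a - b|) Q (Measure.dirac m) ≤ ENNReal.ofReal ε := by
    have h := wassersteinDist_map_le_eLpNorm_sub Q measurable_id (measurable_const (a := m))
    rw [Measure.map_id, Measure.map_const, measure_univ, one_smul] at h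
    exact h.trans hcost
  refine ⟨Q, mem_realWassersteinBall_of_memLp (memLp_id_empMeasure two_pos _) hW, ?_⟩
  rw [variance_empMeasure two_pos]
  simp [Fin.sum_univ_two]
  ring

lemma exists_mem_realWassersteinBall_variance_eq_of_variance_pos {ν : Measure ℝ}
    [IsProbabilityMeasure ν] (hν : MemLp id 2 ν) (hpos : 0 < Var[id; ν]) {ε : ℝ} (hε : 0 ≤ ε) :
    ∃ Q ∈ realWassersteinBall 2 Set.univ ν ε, Var[id; Q] = (√Var[id; ν] + ε) ^ 2 := by
  set s := √Var[id; ν]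
  have hs : 0 < s := Real.sqrt_pos.2 hpos
  set m := ν[id]
  set c := ε / s
  set f : ℝ → ℝ := fun x => (1 + c) * x - c * m
  have hf : Measurable f := by fun_prop
  have := Measure.isProbabilityMeasure_map (μ := ν) hf.aemeasurable
  have hmem : MemLp id 2 (ν.map f) :=
    (memLp_map_measure_iff aestronglyMeasurable_id hf.aemeasurable).2
      ((hν.const_mul (1 + c)).sub (memLp_const (c * m)))
  have hcost : eLpNorm (fun x => f x - id x) 2 ν = ENNReal.ofReal ε := by
    have hfx : (fun x => f x - id x) = c • fun x => x - m := by ext x; simp [f]; ring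
    have hsd : eLpNorm (fun x => x - m) 2 ν = ENNReal.ofReal s :=
      eLpNorm_sub_integral_eq_ofReal_sqrt_variance hν
    rw [hfx, eLpNorm_const_smul, hsd, Real.enorm_of_nonneg (by positivity),
      ← ENNReal.ofReal_mul (by positivity), div_mul_cancel₀ ε hs.ne']
  have hW : wassersteinDist 2 (fun a b => |a - b|) (ν.map f) ν ≤ ENNReal.ofReal ε := by
    have h := wassersteinDist_map_le_eLpNorm_sub ν hf measurable_id
    rw [Measure.map_id] at h
    exact h.trans_eq hcost
  refine ⟨ν.map f, mem_realWassersteinBall_of_memLp hmem hW, ?_⟩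
  rw [variance_id_map hf.aemeasurable, variance_sub_const (by fun_prop), variance_const_mul]
  have hvar : Var[id; ν] = s ^ 2 := (Real.sq_sqrt (variance_nonneg _ _)).symm
  change (1 + c) ^ 2 * Var[id; ν] = _
  rw [hvar]
  simp only [c]
  field_simp

lemma exists_mem_realWassersteinBall_variance_eq {ν : Measure ℝ} [IsProbabilityMeasure ν]
    (hν : MemLp id 2 ν) {ε : ℝ} (hε : 0 ≤ ε) :
    ∃ Q ∈ realWassersteinBall 2 Set.univ ν ε, Var[id; Q] = (√Var[id; ν] + ε) ^ 2 := by
  rcases (variance_nonneg id ν).eq_or_lt with h | h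
  · rw [← h, Real.sqrt_zero, zero_add, eq_dirac_of_variance_eq_zero hν h.symm]
    exact exists_mem_realWassersteinBall_dirac_variance_eq _ hε
  · exact exists_mem_realWassersteinBall_variance_eq_of_variance_pos hν h hε

theorem sSup_variance_realWassersteinBall {ν : Measure ℝ} [IsProbabilityMeasure ν]
    (hν : MemLp id 2 ν) {ε : ℝ} (hε : 0 ≤ ε) :
    sSup ((fun Q : Measure ℝ => (Var[id; Q] : EReal)) '' realWassersteinBall 2 Set.univ ν ε) =
      ((√Var[id; ν] + ε) ^ 2 : ℝ) := by
  refine IsGreatest.csSup_eq ⟨?_, ?_⟩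
  · obtain ⟨Q, hQ, hvar⟩ := exists_mem_realWassersteinBall_variance_eq hν hε
    exact ⟨Q, hQ, congrArg _ hvar⟩
  · rintro _ ⟨Q, ⟨hQ, -, -, hW⟩, rfl⟩
    exact EReal.coe_le_coe_iff.2 (variance_le_of_wassersteinDist_le hν hε hW)

/-- Worst-case variance over a `2`-Wasserstein ball around an empirical
distribution on `ℝ`: `sup = (sample standard deviation + ε)²`. -/
theorem statement18 {N : ℕ} (hN : 0 < N)
    (ζ : Fin N → ℝ) (ε : ℝ) (hε : 0 < ε) :
    sSup ((fun Q : Measure ℝ => ((ProbabilityTheory.variance id Q : ℝ) : EReal)) ''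
        realWassersteinBall 2 Set.univ (empMeasure ζ) ε) =
      (((Real.sqrt ((1 / (N : ℝ)) * ∑ i, ζ i ^ 2 - ((1 / (N : ℝ)) * ∑ i, ζ i) ^ 2) + ε) ^ 2 :
        ℝ) : EReal) := by
  have := isProbabilityMeasure_empMeasure_s18 hN ζ
  rw [one_div, ← variance_empMeasure hN ζ]
  exact sSup_variance_realWassersteinBall (memLp_id_empMeasure hN ζ) hε.le
end
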